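/- arXiv:0909.5429 — 3 statements merged into one kernel-verified Lean document; each statement's English description precedes it below -/
import Mathlib

section
/- Let f, g ∈ ℂ[x_1,…,x_n] be weighted homogeneous polynomials of degree d with respect to weights (w_1,…,w_n) with J_f = J_g, and for t ∈ ℂ set f_t = (1−t)f + tg. Let V_t be the ℂ-linear span of the polynomials x^P · ∂f_t/∂x_i for i = 1,…,n and multi-indices P with ⟨P, w⟩ = w_i. Then the set of t ∈ ℂ for which V_t ≠ J_f ∩ H_w^d is finite; in particular dim_ℂ V_t is constant for all t outside a finite set. -/
open MvPolynomial

/-- The Jacobian ideal of a polynomial: the ideal generated by its partial derivatives. -/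
noncomputable def jacobianIdeal {n : ℕ} (f : MvPolynomial (Fin n) ℂ) :
    Ideal (MvPolynomial (Fin n) ℂ) :=
  Ideal.span (Set.range fun i => pderiv i f)

/-- The tangent space to the `J₀`-orbit of `h`: the ℂ-linear span of the polynomials
`x^P · ∂h/∂xᵢ` for `i = 1, …, n` and multi-indices `P` with `⟨P, w⟩ = wᵢ`. -/
noncomputable def orbitTangent {n : ℕ} (w : Fin n → ℕ) (h : MvPolynomial (Fin n) ℂ) :
    Submodule ℂ (MvPolynomial (Fin n) ℂ) :=
  Submodule.span ℂ
    {q | ∃ (i : Fin n) (P : Fin n →₀ ℕ), (∑ j, w j * P j) = w i ∧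
      q = monomial P 1 * pderiv i h}

/-!
Write `f_t = f + t (g - f)`. Since `J_f = J_g`, every generator `x^P ∂ᵢf_t` of `V_t` lies in
`W = J_f ∩ H_w^d`, and `V_0 = W` because a degree-`d` element `∑ cᵢ ∂ᵢf` of `J_f` equals
`∑ cᵢ' ∂ᵢf` with `cᵢ'` the weighted degree-`wᵢ` part of `cᵢ`. Positive weights make `W` finite
dimensional, so `V_0 = W` is spanned by finitely many generators `eₖ = x^P ∂ᵢf` forming a basis.
Their deformations `eₖ + t vₖ`, `vₖ = x^P ∂ᵢ(g - f)`, have determinant, with respect to `e`,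
a polynomial in `t` taking the value `1` at `t = 0`; off its finitely many roots they still span
`W`, hence `V_t = W`.
-/

section GenericSpan

open Polynomial Submodule Set

variable {K V : Type*} [Field K] [AddCommGroup V] [Module K V]

theorem Module.Basis.finite_setOf_span_add_smul_ne_top {κ : Type*} [Fintype κ] [DecidableEq κ]
    (e : Module.Basis κ K V) (v : κ → V) :
    {t : K | span K (range fun s => e s + t • v s) ≠ ⊤}.Finite := by
  set p : K[X] := (1 + (X : K[X]) • (e.toMatrix v).map Polynomial.C).det
  have hp : ∀ t, p.eval t = e.det fun s => e s + t • v s := by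
    intro t
    rw [Module.Basis.det_apply, ← coe_evalRingHom, RingHom.map_det]
    congr 1
    ext i j
    simp [Module.Basis.toMatrix_apply, Matrix.one_apply, Finsupp.single_apply, eq_comm]
    split_ifs <;> simp [mul_comm]
  have hp0 : p ≠ 0 := fun h => by simpa [h, Module.Basis.det_self] using hp 0
  refine (finite_setOfPred_isRoot hp0).subset fun t ht => ?_
  by_contra hroot
  rw [mem_ofPred_eq, IsRoot.def, hp] at hroot
  exact ht ((e.is_basis_iff_det).mpr (isUnit_iff_ne_zero.mpr hroot)).2

theorem finite_setOf_span_add_smul_ne_top [FiniteDimensional K V] {ι : Type*} {u v : ι → V}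
    (hu : span K (range u) = ⊤) :
    {t : K | span K (range fun s => u s + t • v s) ≠ ⊤}.Finite := by
  classical
  obtain ⟨κ, a, -, hspan, hli⟩ := exists_linearIndependent' K u
  have : Fintype κ := @Fintype.ofFinite κ hli.finite
  let e := Module.Basis.mk hli (hspan.trans hu).ge
  refine (e.finite_setOf_span_add_smul_ne_top (v ∘ a)).subset fun t ht he => ht ?_
  refine eq_top_iff.mpr (he.symm.trans_le (span_mono ?_))
  rintro _ ⟨k, rfl⟩
  exact ⟨a k, by simp [e]⟩

theorem Submodule.span_range_coe_eq_iff {W : Submodule K V} {ι : Type*} (x : ι → W) :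
    span K (range fun s => (x s : V)) = W ↔ span K (range x) = ⊤ := by
  rw [← (map_injective_of_injective W.injective_subtype).eq_iff, Submodule.map_top,
    range_subtype, map_span, ← range_comp]
  rfl

theorem finite_setOf_span_add_smul_ne {W : Submodule K V} [FiniteDimensional K W]
    {ι : Type*} {u v : ι → V} (hu : span K (range u) = W) (hv : ∀ s, v s ∈ W) :
    {t : K | span K (range fun s => u s + t • v s) ≠ W}.Finite := by
  set u' : ι → W := fun s => ⟨u s, hu ▸ subset_span ⟨s, rfl⟩⟩
  set v' : ι → W := fun s => ⟨v s, hv s⟩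
  refine (finite_setOf_span_add_smul_ne_top (v := v') ((span_range_coe_eq_iff u').mp hu)).subset
    fun t ht => ?_
  exact fun h => ht ((span_range_coe_eq_iff (fun s => u' s + t • v' s)).mpr h)

end GenericSpan

theorem Finsupp.sum_mul_eq_weight {σ : Type*} [Fintype σ] (w : σ → ℕ) (P : σ →₀ ℕ) :
    ∑ j, w j * P j = Finsupp.weight w P := by
  simp [Finsupp.weight_eq_sum, mul_comm]

namespace MvPolynomial

variable {R σ : Type*} [CommSemiring R] {w : σ → ℕ}

noncomputable def monomialMulPderiv (p : σ × (σ →₀ ℕ)) :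
    MvPolynomial σ R →ₗ[R] MvPolynomial σ R :=
  LinearMap.mulLeft R (monomial p.2 1) ∘ₗ (pderiv p.1).toLinearMap

theorem weightedHomogeneousComponent_mul_of_isWeightedHomogeneous {c q : MvPolynomial σ R}
    {e d : ℕ} (hq : IsWeightedHomogeneous w q e) (hed : e ≤ d) :
    weightedHomogeneousComponent w d (c * q) = weightedHomogeneousComponent w (d - e) c * q := by
  let := weightedGradedAlgebra R w
  rw [← decompose'_apply R w, ← decompose'_apply R w]
  exact DirectSum.coe_decompose_mul_of_right_mem_of_le (weightedHomogeneousSubmodule R w) hq hed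

theorem pderiv_eq_zero_of_lt_weight {f : MvPolynomial σ R} {d : ℕ}
    (hf : IsWeightedHomogeneous w f d) {i : σ} (hd : d < w i) : pderiv i f = 0 := by
  classical
  rw [f.as_sum, map_sum]
  refine Finset.sum_eq_zero fun s hs => ?_
  have hsi : s i = 0 := by
    by_contra hsi
    have := Finsupp.weight_sub_single_add (w := w) hsi
    rw [hf (mem_support_iff.mp hs)] at this
    omega
  simp [pderiv_monomial, hsi]

theorem IsWeightedHomogeneous.monomial_mul_pderiv {f : MvPolynomial σ R} {d : ℕ}
    (hf : IsWeightedHomogeneous w f d) {i : σ} {P : σ →₀ ℕ} (hP : Finsupp.weight w P = w i) :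
    IsWeightedHomogeneous w (monomial P 1 * pderiv i f) d := by
  by_cases hi : w i ≤ d
  · simpa [Nat.add_sub_cancel' hi] using
      (isWeightedHomogeneous_monomial w P (1 : R) hP).mul (hf.pderiv (n' := d - w i) (by omega))
  · rw [pderiv_eq_zero_of_lt_weight hf (by omega), mul_zero]
    exact isWeightedHomogeneous_zero R w d

end MvPolynomial

section OrbitTangent

variable {n : ℕ} {w : Fin n → ℕ}

def orbitTangentIndex (w : Fin n → ℕ) : Set (Fin n × (Fin n →₀ ℕ)) :=
  {p | ∑ j, w j * p.2 j = w p.1}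

theorem orbitTangent_eq_span_monomialMulPderiv (w : Fin n → ℕ) (h : MvPolynomial (Fin n) ℂ) :
    orbitTangent w h =
      Submodule.span ℂ (Set.range fun p : orbitTangentIndex w => monomialMulPderiv p.1 h) := by
  rw [orbitTangent]
  congr 1
  ext q
  constructor
  · rintro ⟨i, P, hP, rfl⟩
    exact ⟨⟨(i, P), hP⟩, rfl⟩
  · rintro ⟨⟨⟨i, P⟩, hP⟩, rfl⟩
    exact ⟨i, P, hP, rfl⟩

theorem monomialMulPderiv_mem_inf {h : MvPolynomial (Fin n) ℂ} {d : ℕ}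
    (hh : IsWeightedHomogeneous w h d) {p : Fin n × (Fin n →₀ ℕ)} (hp : p ∈ orbitTangentIndex w) :
    monomialMulPderiv p h ∈
      (jacobianIdeal h).restrictScalars ℂ ⊓ weightedHomogeneousSubmodule ℂ w d := by
  refine ⟨Ideal.mul_mem_left _ _ (Ideal.subset_span ⟨p.1, rfl⟩), ?_⟩
  exact hh.monomial_mul_pderiv ((Finsupp.sum_mul_eq_weight w p.2).symm.trans hp)

theorem mul_pderiv_mem_orbitTangent (h : MvPolynomial (Fin n) ℂ) {i : Fin n}
    {r : MvPolynomial (Fin n) ℂ} (hr : IsWeightedHomogeneous w r (w i)) :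
    r * pderiv i h ∈ orbitTangent w h := by
  rw [r.as_sum, Finset.sum_mul]
  refine Submodule.sum_mem _ fun k hk => ?_
  have hk : ∑ j, w j * k j = w i :=
    (Finsupp.sum_mul_eq_weight w k).trans (hr (mem_support_iff.mp hk))
  rw [show monomial k (coeff k r) = coeff k r • monomial k 1 by
    rw [smul_monomial, smul_eq_mul, mul_one], smul_mul_assoc]
  exact Submodule.smul_mem _ _ (Submodule.subset_span ⟨i, k, hk, rfl⟩)

theorem orbitTangent_eq_inf_of_isWeightedHomogeneous {f : MvPolynomial (Fin n) ℂ} {d : ℕ}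
    (hf : IsWeightedHomogeneous w f d) :
    orbitTangent w f =
      (jacobianIdeal f).restrictScalars ℂ ⊓ weightedHomogeneousSubmodule ℂ w d := by
  refine le_antisymm ?_ fun p ⟨hpJ, hpH⟩ => ?_
  · rw [orbitTangent_eq_span_monomialMulPderiv, Submodule.span_le]
    rintro _ ⟨p, rfl⟩
    exact monomialMulPderiv_mem_inf hf p.2
  obtain ⟨c, rfl⟩ := (Ideal.mem_span_range_iff_exists_fun).mp hpJ
  rw [← (hpH : IsWeightedHomogeneous w _ d).weightedHomogeneousComponent_same, map_sum]
  refine Submodule.sum_mem _ fun i _ => ?_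
  by_cases hi : w i ≤ d
  · rw [weightedHomogeneousComponent_mul_of_isWeightedHomogeneous
      (hf.pderiv (n' := d - w i) (by omega)) (Nat.sub_le d (w i)), Nat.sub_sub_self hi]
    exact mul_pderiv_mem_orbitTangent f (weightedHomogeneousComponent_isWeightedHomogeneous _ _)
  · rw [pderiv_eq_zero_of_lt_weight hf (by omega), mul_zero, map_zero]
    exact Submodule.zero_mem _

end OrbitTangent

/-- Let `f, g` be weighted homogeneous of degree `d` (positive weights) with `J_f = J_g`, and
`f_t = (1 - t)·f + t·g` with `V_t` the span of the `x^P · ∂f_t/∂xᵢ` (`⟨P, w⟩ = wᵢ`).  Then the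
set of `t ∈ ℂ` for which `V_t ≠ J_f ∩ H_w^d` is finite; in particular `dim_ℂ V_t` is constant
for all `t` outside a finite set. -/
theorem orbitTangent_eq_off_finite_and_dim_const
    (n : ℕ) (w : Fin n → ℕ) (hw : ∀ i, 0 < w i) (d : ℕ)
    (f g : MvPolynomial (Fin n) ℂ)
    (hf : IsWeightedHomogeneous w f d) (hg : IsWeightedHomogeneous w g d)
    (hJ : jacobianIdeal f = jacobianIdeal g) :
    {t : ℂ | orbitTangent w (C (1 - t) * f + C t * g) ≠
        (jacobianIdeal f).restrictScalars ℂ ⊓ weightedHomogeneousSubmodule ℂ w d}.Finite ∧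
    ∃ (T : Set ℂ) (m : ℕ), T.Finite ∧ ∀ t ∉ T,
      Module.finrank ℂ (orbitTangent w (C (1 - t) * f + C t * g)) = m := by
  set W := (jacobianIdeal f).restrictScalars ℂ ⊓ weightedHomogeneousSubmodule ℂ w d
  have : FiniteDimensional ℂ (weightedHomogeneousSubmodule ℂ w d) :=
    Module.Finite.iff_fg.mpr (weightedHomogeneousSubmodule_fg ℂ w (fun i => (hw i).ne') d)
  have : FiniteDimensional ℂ W := Submodule.finiteDimensional_of_le inf_le_right
  have hV : ∀ t : ℂ, orbitTangent w (C (1 - t) * f + C t * g) =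
      Submodule.span ℂ (Set.range fun p : orbitTangentIndex w =>
        monomialMulPderiv p.1 f + t • monomialMulPderiv p.1 (g - f)) := by
    intro t
    rw [orbitTangent_eq_span_monomialMulPderiv, show C (1 - t) * f + C t * g = f + t • (g - f) by
      rw [smul_eq_C_mul, C_sub, C_1]; ring]
    simp only [map_add, map_smul]
  have hbad : {t : ℂ | orbitTangent w (C (1 - t) * f + C t * g) ≠ W}.Finite := by
    simp only [hV]
    refine finite_setOf_span_add_smul_ne ?_ fun p => ?_
    · rw [← orbitTangent_eq_span_monomialMulPderiv, orbitTangent_eq_inf_of_isWeightedHomogeneous hf]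
    · rw [map_sub]
      have hgW := monomialMulPderiv_mem_inf hg p.2
      rw [← hJ] at hgW
      exact sub_mem hgW (monomialMulPderiv_mem_inf hf p.2)
  exact ⟨hbad, _, _, hbad, fun t ht => by rw [not_not.mp ht]⟩
end

section
/- Let f, g ∈ ℂ[x_1,…,x_n] be weighted homogeneous polynomials of degree d with respect to weights (w_1,…,w_n), and suppose φ : M(g) → M(f) is an isomorphism of graded ℂ-algebras (where the grading gives x_i degree w_i). Then φ is induced by a ℂ-algebra automorphism u* of ℂ[x_1,…,x_n] preserving the weighted grading and satisfying u*(J_g) = J_f. -/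
open MvPolynomial

/-- The Milnor algebra `M(f) = ℂ[x₁,…,xₙ] / J_f`. -/
abbrev MilnorAlgebra {n : ℕ} (f : MvPolynomial (Fin n) ℂ) : Type :=
  MvPolynomial (Fin n) ℂ ⧸ jacobianIdeal f

/-- The degree-`e` graded piece of the Milnor algebra of `f` for the weighted grading. -/
noncomputable def milnorPiece {n : ℕ} (w : Fin n → ℕ) (f : MvPolynomial (Fin n) ℂ) (e : ℕ) :
    Submodule ℂ (MilnorAlgebra f) :=
  Submodule.map (Ideal.Quotient.mkₐ ℂ (jacobianIdeal f)).toLinearMap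
    (weightedHomogeneousSubmodule ℂ w e)

/-!
Choose weighted homogeneous lifts `q i` of `φ [X i]`. The substitution `X i ↦ q i` induces `φ` but
need not be invertible. Since `φ` is onto in each weight `m`, and a substitution changes linear
parts only through linear monomials, the linear parts of the `q i` of weight `m` together with
the linear parts of the weight-`m` elements of `J_f` span all linear forms of weight `m`. Hence
the `q i` can be corrected by elements of `J_f` of the same weight until their linear parts span
in every weight. The resulting graded endomorphism is surjective (induction on the weight),
hence bijective because `ℂ[x]` is Noetherian, and it carries `J_g` onto `J_f` because it
induces the isomorphism `φ`.
-/

open Function Module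

theorem Submodule.exists_surjective_lift_of_finrank_eq {K V F : Type*} [Field K]
    [AddCommGroup V] [Module K V] [FiniteDimensional K V]
    [AddCommGroup F] [Module K F] [FiniteDimensional K F]
    (W : Submodule K V) (A : F →ₗ[K] V ⧸ W) (hA : Surjective A)
    (hdim : finrank K F = finrank K V) : ∃ B : F →ₗ[K] V, W.mkQ ∘ₗ B = A ∧ Surjective B := by
  obtain ⟨B₀, hB₀⟩ := Module.projective_lifting_property W.mkQ A W.mkQ_surjective
  have hB₀_ker : ∀ k : LinearMap.ker A, B₀ k ∈ W := fun k => by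
    rw [← Submodule.Quotient.mk_eq_zero, ← W.mkQ_apply, ← LinearMap.comp_apply, hB₀]
    exact k.2
  have hrank : finrank K (LinearMap.ker A) = finrank K W := by
    have := A.finrank_range_add_finrank_ker
    have := W.finrank_quotient_add_finrank
    rw [LinearMap.range_eq_top.mpr hA, finrank_top] at *
    omega
  -- Correct `B₀` by a map into `W` so that on `ker A` it becomes the isomorphism `e` onto `W`.
  let e := LinearEquiv.ofFinrankEq _ _ hrank
  obtain ⟨D, hD⟩ := LinearMap.exists_extend
    (e.toLinearMap - (B₀ ∘ₗ (LinearMap.ker A).subtype).codRestrict W hB₀_ker)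
  have hmkQ : W.mkQ ∘ₗ (B₀ + W.subtype ∘ₗ D) = A := by
    ext x; simp [← hB₀]
  refine ⟨B₀ + W.subtype ∘ₗ D, hmkQ, ?_⟩
  rw [← LinearMap.injective_iff_surjective_of_finrank_eq_finrank hdim,
    injective_iff_map_eq_zero]
  intro x hx
  have hker : x ∈ LinearMap.ker A := by
    rw [LinearMap.mem_ker, ← hmkQ, LinearMap.comp_apply, hx, map_zero]
  have hDx : (D x : V) = e ⟨x, hker⟩ - B₀ x :=
    congrArg (fun f => (f ⟨x, hker⟩ : V)) hD
  have he : e ⟨x, hker⟩ = 0 := by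
    ext
    rw [Submodule.coe_zero, ← hx, LinearMap.add_apply, LinearMap.comp_apply,
      Submodule.subtype_apply, hDx]
    abel
  simpa using he

theorem Submodule.exists_add_span_eq_top {ι K V : Type*} [Fintype ι] [Field K]
    [AddCommGroup V] [Module K V] [FiniteDimensional K V]
    (a : ι → V) (W : Submodule K V) (H : span K (Set.range a) ⊔ W = ⊤)
    (hdim : finrank K V = Fintype.card ι) :
    ∃ δ : ι → V, (∀ i, δ i ∈ W) ∧ span K (Set.range fun i => a i + δ i) = ⊤ := by
  classical
  let A := W.mkQ ∘ₗ Fintype.linearCombination K a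
  have hA : Surjective A := by
    rw [← LinearMap.range_eq_top, LinearMap.range_comp, Fintype.range_linearCombination,
      Submodule.map_mkQ_eq_top, sup_comm, H]
  obtain ⟨B, hBA, hB⟩ := W.exists_surjective_lift_of_finrank_eq A hA (by simp [hdim])
  refine ⟨fun i => B (Pi.single i 1) - a i, fun i => ?_, ?_⟩
  · rw [← Submodule.Quotient.mk_eq_zero, Submodule.Quotient.mk_sub, sub_eq_zero,
      ← W.mkQ_apply, ← LinearMap.comp_apply, hBA]
    simp [A, Fintype.linearCombination_apply, Pi.single_apply]
  · have hab : (fun i => a i + (B (Pi.single i 1) - a i)) = B ∘ Pi.basisFun K ι := by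
      ext i; simp
    rw [hab, Set.range_comp, Submodule.span_image, (Pi.basisFun K ι).span_eq, Submodule.map_top,
      LinearMap.range_eq_top.mpr hB]

theorem RingHom.injective_of_surjective_of_isNoetherianRing {A : Type*} [CommRing A]
    [IsNoetherianRing A] (σ : A →+* A) (hσ : Surjective σ) : Injective σ := by
  obtain ⟨N, hN⟩ := monotone_stabilizes_iff_noetherian.mpr (inferInstance : IsNoetherian A A)
    ⟨fun k => RingHom.ker (σ ^ k), monotone_nat_of_le_succ fun k x hx => by
      simp_all [pow_succ']⟩
  rw [injective_iff_map_eq_zero]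
  intro x hx
  obtain ⟨y, rfl⟩ := (RingHom.coe_pow σ N ▸ hσ.iterate N) x
  have hy : y ∈ RingHom.ker (σ ^ (N + 1)) := by simpa [pow_succ'] using hx
  have hstable : RingHom.ker (σ ^ N) = RingHom.ker (σ ^ (N + 1)) := hN (N + 1) N.le_succ
  rwa [← hstable] at hy

theorem Ideal.map_eq_of_quotient_mk_comm {A B : Type*} [CommRing A] [CommRing B]
    {I : Ideal A} {J : Ideal B} (U : A ≃+* B) (φ : A ⧸ I ≃+* B ⧸ J)
    (h : ∀ a, φ (Ideal.Quotient.mk I a) = Ideal.Quotient.mk J (U a)) :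
    I.map (U : A →+* B) = J := by
  ext b
  rw [Ideal.map_comap_of_equiv, Ideal.mem_comap, ← Ideal.Quotient.eq_zero_iff_mem,
    ← Ideal.Quotient.eq_zero_iff_mem (I := J), ← map_eq_zero_iff φ φ.injective, h,
    RingEquiv.apply_symm_apply]

theorem Finsupp.exists_eq_single_add_of_ne_zero {σ : Type*} {k : σ →₀ ℕ} (h0 : k ≠ 0)
    (h1 : ∀ i, k ≠ Finsupp.single i 1) : ∃ i k', k' ≠ 0 ∧ k = Finsupp.single i 1 + k' := by
  obtain ⟨i, hi⟩ := Finsupp.support_nonempty_iff.mpr h0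
  have hk : Finsupp.single i 1 + (k - Finsupp.single i 1) = k :=
    add_tsub_cancel_of_le (Finsupp.single_le_iff.mpr (Nat.one_le_iff_ne_zero.mpr
      (Finsupp.mem_support_iff.mp hi)))
  refine ⟨i, k - Finsupp.single i 1, fun h => h1 i ?_, hk.symm⟩
  rwa [h, add_zero, eq_comm] at hk

namespace MvPolynomial

theorem IsWeightedHomogeneous.aeval {σ τ R M : Type*} [CommSemiring R] [AddCommMonoid M]
    {w : σ → M} {w' : τ → M} {q : σ → MvPolynomial τ R}
    (hq : ∀ i, IsWeightedHomogeneous w' (q i) (w i)) {p : MvPolynomial σ R} {e : M}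
    (hp : IsWeightedHomogeneous w p e) : IsWeightedHomogeneous w' (aeval q p) e := by
  induction hp using IsWeightedHomogeneous.induction_on with
  | zero => simpa using isWeightedHomogeneous_zero R w' e
  | add p p' _ _ ih ih' => simpa using ih.add ih'
  | monomial k c hk =>
    rw [aeval_monomial, ← hk, Finsupp.weight_apply, Finsupp.sum, Finsupp.prod, algebraMap_eq]
    simpa using (isWeightedHomogeneous_C w' c).mul
      (IsWeightedHomogeneous.prod _ _ _ fun i _ => (hq i).pow (k i))

section CommSemiring

variable {σ R : Type*} [CommSemiring R]

theorem IsWeightedHomogeneous.constantCoeff_eq_zero {M : Type*} [AddCommMonoid M]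
    {w : σ → M} {p : MvPolynomial σ R} {e : M}
    (hp : IsWeightedHomogeneous w p e) (he : e ≠ 0) : constantCoeff p = 0 := by
  rw [constantCoeff_eq]
  exact hp.coeff_eq_zero 0 (by simpa [eq_comm] using he)

theorem coeff_single_one_mul_eq_zero {p q : MvPolynomial σ R}
    (hp : constantCoeff p = 0) (hq : constantCoeff q = 0) (i : σ) :
    coeff (Finsupp.single i 1) (p * q) = 0 := by
  classical
  rw [constantCoeff_eq] at hp hq
  simp [coeff_mul, Finsupp.antidiagonal_single, Finset.Nat.antidiagonal_succ, hp, hq]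

theorem constantCoeff_aeval_monomial_eq_zero {q : σ → MvPolynomial σ R}
    (hq : ∀ i, constantCoeff (q i) = 0) {k : σ →₀ ℕ} (hk : k ≠ 0) (c : R) :
    constantCoeff (aeval q (monomial k c)) = 0 := by
  obtain ⟨i, hi⟩ := Finsupp.support_nonempty_iff.mpr hk
  rw [aeval_monomial, map_mul, Finsupp.prod, map_prod]
  exact mul_eq_zero_of_right _ (Finset.prod_eq_zero hi (by
    simp [hq, zero_pow (Finsupp.mem_support_iff.mp hi)]))

theorem coeff_single_one_aeval_monomial_eq_zero {q : σ → MvPolynomial σ R}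
    (hq : ∀ i, constantCoeff (q i) = 0) {k : σ →₀ ℕ} (h0 : k ≠ 0)
    (h1 : ∀ i, k ≠ Finsupp.single i 1) (c : R) (j : σ) :
    coeff (Finsupp.single j 1) (aeval q (monomial k c)) = 0 := by
  obtain ⟨i, k', hk', rfl⟩ := Finsupp.exists_eq_single_add_of_ne_zero h0 h1
  rw [show monomial (Finsupp.single i 1 + k') c = X i * monomial k' c by
    rw [monomial_single_add, pow_one], map_mul, aeval_X]
  exact coeff_single_one_mul_eq_zero (hq i) (constantCoeff_aeval_monomial_eq_zero hq hk' c) j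

variable (R) in
noncomputable def linearCoeffsOfWeight (w : σ → ℕ) (m : ℕ) :
    MvPolynomial σ R →ₗ[R] ({i // w i = m} → R) :=
  LinearMap.pi fun i => lcoeff R (Finsupp.single i.1 1)

variable {w : σ → ℕ} {m : ℕ}

theorem linearCoeffsOfWeight_apply (p : MvPolynomial σ R) (i : {i // w i = m}) :
    linearCoeffsOfWeight R w m p i = coeff (Finsupp.single i.1 1) p := rfl

theorem linearCoeffsOfWeight_X [DecidableEq σ] (j : {i // w i = m}) :
    linearCoeffsOfWeight R w m (X j.1) = Pi.single j 1 := by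
  ext i
  simp [linearCoeffsOfWeight_apply, coeff_X, Pi.single_apply, Subtype.ext_iff,
    Finsupp.single_left_inj one_ne_zero, eq_comm]

theorem linearCoeffsOfWeight_aeval_mem_span {q : σ → MvPolynomial σ R}
    (hq : ∀ i, constantCoeff (q i) = 0) {z : MvPolynomial σ R}
    (hz : IsWeightedHomogeneous w z m) :
    linearCoeffsOfWeight R w m (aeval q z) ∈
      Submodule.span R (Set.range fun i : {i // w i = m} => linearCoeffsOfWeight R w m (q i)) := by
  classical
  induction hz using IsWeightedHomogeneous.induction_on with
  | zero => simp
  | add p p' _ _ ih ih' => simpa using add_mem ih ih'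
  | monomial k c hk =>
    by_cases h0 : k = 0
    · subst h0
      suffices h : linearCoeffsOfWeight R w m (aeval q (monomial 0 c)) = 0 by
        rw [h]; exact zero_mem _
      ext i
      rw [linearCoeffsOfWeight_apply, monomial_zero', aeval_C, algebraMap_eq, coeff_C,
        if_neg (Finsupp.single_ne_zero.mpr one_ne_zero).symm, Pi.zero_apply]
    by_cases h1 : ∃ i, k = Finsupp.single i 1
    · obtain ⟨i, rfl⟩ := h1
      have hi : w i = m := by simpa [Finsupp.weight_single] using hk
      rw [aeval_monomial, Finsupp.prod_single_index (by simp), pow_one, ← Algebra.smul_def,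
        map_smul]
      exact Submodule.smul_mem _ _ (Submodule.subset_span ⟨⟨i, hi⟩, rfl⟩)
    · push Not at h1
      suffices h : linearCoeffsOfWeight R w m (aeval q (monomial k c)) = 0 by
        rw [h]; exact zero_mem _
      ext i
      exact coeff_single_one_aeval_monomial_eq_zero hq h0 h1 c i

theorem IsWeightedHomogeneous.mem_of_forall_lt_of_coeff_eq_zero (hw : ∀ i, 0 < w i)
    {S : Subalgebra R (MvPolynomial σ R)} {e : ℕ}
    (hS : ∀ e' < e, ∀ p : MvPolynomial σ R, IsWeightedHomogeneous w p e' → p ∈ S)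
    {t : MvPolynomial σ R} (ht : IsWeightedHomogeneous w t e) (h0 : coeff 0 t = 0)
    (h1 : ∀ i, coeff (Finsupp.single i 1) t = 0) : t ∈ S := by
  classical
  rw [t.as_sum]
  refine Subalgebra.sum_mem _ fun k hk => ?_
  have hkt := mem_support_iff.mp hk
  obtain ⟨i, k', hk', rfl⟩ := Finsupp.exists_eq_single_add_of_ne_zero (k := k)
    (by rintro rfl; exact hkt h0) (by rintro i rfl; exact hkt (h1 i))
  have hwk : w i + Finsupp.weight w k' = e := by simpa [Finsupp.weight_single] using ht hkt
  obtain ⟨l, hl⟩ := Finsupp.support_nonempty_iff.mpr hk'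
  have hk'_pos : 0 < Finsupp.weight w k' :=
    (hw l).trans_le (Finsupp.le_weight_of_ne_zero' w (Finsupp.mem_support_iff.mp hl))
  rw [monomial_single_add, pow_one]
  have hi_lt : w i < e := by omega
  have hk'_lt : Finsupp.weight w k' < e := by have := hw i; omega
  exact mul_mem (hS (w i) hi_lt _ (isWeightedHomogeneous_X R w i))
    (hS (Finsupp.weight w k') hk'_lt _ (isWeightedHomogeneous_monomial _ _ _ rfl))

end CommSemiring

section CommRing

variable {σ R : Type*} [CommRing R] {w : σ → ℕ}

theorem X_mem_of_span_linearCoeffsOfWeight (hw : ∀ i, 0 < w i) {u : σ → MvPolynomial σ R}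
    (hu : ∀ i, IsWeightedHomogeneous w (u i) (w i)) {j : σ}
    (hspan : Submodule.span R
      (Set.range fun i : {i // w i = w j} => linearCoeffsOfWeight R w (w j) (u i)) = ⊤)
    {S : Subalgebra R (MvPolynomial σ R)}
    (hS : ∀ e < w j, ∀ p : MvPolynomial σ R, IsWeightedHomogeneous w p e → p ∈ S)
    (huS : ∀ i, u i ∈ S) : X j ∈ S := by
  classical
  obtain ⟨s, hs, hsX⟩ : ∃ s ∈ Submodule.span R (Set.range fun i : {i // w i = w j} => u i),
      linearCoeffsOfWeight R w (w j) s = linearCoeffsOfWeight R w (w j) (X j) := by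
    rw [← Submodule.mem_map, Submodule.map_span, ← Set.range_comp, Function.comp_def, hspan]
    trivial
  have hs_mem : s ∈ S := by
    refine (Submodule.span_le (p := Subalgebra.toSubmodule S)).mpr ?_ hs
    rintro _ ⟨i, rfl⟩
    exact huS i
  have hs_hom : IsWeightedHomogeneous w s (w j) := by
    refine (Submodule.span_le (p := weightedHomogeneousSubmodule R w (w j))).mpr ?_ hs
    rintro _ ⟨i, rfl⟩
    simpa [i.2] using hu i
  have ht_hom := (isWeightedHomogeneous_X R w j).sub hs_hom
  have ht : X j - s ∈ S := ht_hom.mem_of_forall_lt_of_coeff_eq_zero hw hS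
    (by rw [← constantCoeff_eq]; exact ht_hom.constantCoeff_eq_zero (hw j).ne') fun i => by
      by_cases hi : w i = w j
      · simpa [linearCoeffsOfWeight_apply, sub_eq_zero] using congrFun hsX.symm ⟨i, hi⟩
      · exact ht_hom.coeff_eq_zero _ (by simpa [Finsupp.weight_single] using hi)
  simpa using add_mem ht hs_mem

theorem aeval_surjective_of_span_linearCoeffsOfWeight
    (hw : ∀ i, 0 < w i) {u : σ → MvPolynomial σ R}
    (hu : ∀ i, IsWeightedHomogeneous w (u i) (w i))
    (hspan : ∀ m, Submodule.span R
      (Set.range fun i : {i // w i = m} => linearCoeffsOfWeight R w m (u i)) = ⊤) :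
    Surjective (aeval (R := R) u) := by
  classical
  set S := (aeval (R := R) u).range
  suffices hS : ∀ e, ∀ p : MvPolynomial σ R, IsWeightedHomogeneous w p e → p ∈ S by
    rw [← AlgHom.range_eq_top, eq_top_iff, ← adjoin_range_X, Algebra.adjoin_le_iff]
    rintro _ ⟨i, rfl⟩
    exact hS _ _ (isWeightedHomogeneous_X R w i)
  intro e
  induction e using Nat.strong_induction_on with | _ e ih =>
  have hX : ∀ j, w j = e → X j ∈ S := by
    rintro j rfl
    exact X_mem_of_span_linearCoeffsOfWeight hw hu (hspan (w j)) ih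
      fun i => ⟨X i, aeval_X u i⟩
  intro p hp
  induction hp using IsWeightedHomogeneous.induction_on with
  | zero => exact zero_mem _
  | add p p' _ _ hp hp' => exact add_mem hp hp'
  | monomial k c hk =>
    by_cases h0 : k = 0
    · subst h0
      rw [monomial_zero', ← algebraMap_eq]
      exact S.algebraMap_mem c
    by_cases h1 : ∃ i, k = Finsupp.single i 1
    · obtain ⟨i, rfl⟩ := h1
      rw [show monomial (Finsupp.single i 1) c = c • X i by rw [X, smul_monomial, smul_eq_mul,
        mul_one]]
      exact S.smul_mem (hX i (by simpa [Finsupp.weight_single] using hk)) c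
    · push Not at h1
      exact (isWeightedHomogeneous_monomial w k c hk).mem_of_forall_lt_of_coeff_eq_zero hw ih
        (by simp [coeff_monomial, h0]) fun i => by simp [coeff_monomial, h1 i]

theorem apply_mk_eq_mk_aeval {I J : Ideal (MvPolynomial σ R)}
    (φ : (MvPolynomial σ R ⧸ I) →ₐ[R] (MvPolynomial σ R ⧸ J)) {u : σ → MvPolynomial σ R}
    (hu : ∀ i, Ideal.Quotient.mk J (u i) = φ (Ideal.Quotient.mk I (X i)))
    (p : MvPolynomial σ R) :
    φ (Ideal.Quotient.mk I p) = Ideal.Quotient.mk J (aeval u p) := by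
  have h : φ.comp (Ideal.Quotient.mkₐ R I) = (Ideal.Quotient.mkₐ R J).comp (aeval u) :=
    algHom_ext fun i => by simp [hu]
  exact DFunLike.congr_fun h p

end CommRing

section Field

variable {σ K : Type*} [Field K] {I J : Ideal (MvPolynomial σ K)}

def IsWeightedGraded (w : σ → ℕ) (φ : (MvPolynomial σ K ⧸ I) ≃ₐ[K] (MvPolynomial σ K ⧸ J)) :
    Prop :=
  ∀ e, ((weightedHomogeneousSubmodule K w e).map (Ideal.Quotient.mkₐ K I).toLinearMap).map
      φ.toLinearMap =
    (weightedHomogeneousSubmodule K w e).map (Ideal.Quotient.mkₐ K J).toLinearMap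

namespace IsWeightedGraded

variable {w : σ → ℕ} {φ : (MvPolynomial σ K ⧸ I) ≃ₐ[K] (MvPolynomial σ K ⧸ J)}

theorem exists_lift (hφ : IsWeightedGraded w φ) {p : MvPolynomial σ K} {e : ℕ}
    (hp : IsWeightedHomogeneous w p e) :
    ∃ q, IsWeightedHomogeneous w q e ∧ Ideal.Quotient.mk J q = φ (Ideal.Quotient.mk I p) := by
  obtain ⟨q, hq, hq_eq⟩ : φ (Ideal.Quotient.mk I p) ∈
      (weightedHomogeneousSubmodule K w e).map (Ideal.Quotient.mkₐ K J).toLinearMap :=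
    hφ e ▸ Submodule.mem_map_of_mem (Submodule.mem_map_of_mem hp)
  exact ⟨q, hq, hq_eq⟩

theorem exists_preimage (hφ : IsWeightedGraded w φ) {p : MvPolynomial σ K} {e : ℕ}
    (hp : IsWeightedHomogeneous w p e) :
    ∃ z, IsWeightedHomogeneous w z e ∧ φ (Ideal.Quotient.mk I z) = Ideal.Quotient.mk J p := by
  obtain ⟨_, ⟨z, hz, rfl⟩, hz_eq⟩ : Ideal.Quotient.mk J p ∈
      ((weightedHomogeneousSubmodule K w e).map (Ideal.Quotient.mkₐ K I).toLinearMap).map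
        φ.toLinearMap :=
    (hφ e).symm ▸ Submodule.mem_map_of_mem hp
  exact ⟨z, hz, hz_eq⟩

theorem span_linearCoeffsOfWeight_sup_eq_top [Finite σ] (hw : ∀ i, 0 < w i)
    (hφ : IsWeightedGraded w φ)
    {q : σ → MvPolynomial σ K} (hq_hom : ∀ i, IsWeightedHomogeneous w (q i) (w i))
    (hq_lift : ∀ i, Ideal.Quotient.mk J (q i) = φ (Ideal.Quotient.mk I (X i))) (m : ℕ) :
    Submodule.span K (Set.range fun i : {i // w i = m} => linearCoeffsOfWeight K w m (q i)) ⊔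
      (J.restrictScalars K ⊓ weightedHomogeneousSubmodule K w m).map
        (linearCoeffsOfWeight K w m) = ⊤ := by
  classical
  rw [eq_top_iff, ← (Pi.basisFun K {i // w i = m}).span_eq, Submodule.span_le]
  rintro _ ⟨j, rfl⟩
  have hXj : IsWeightedHomogeneous w (X j.1 : MvPolynomial σ K) m := by
    simpa [j.2] using isWeightedHomogeneous_X K w j.1
  obtain ⟨z, hz, hz_eq⟩ := hφ.exists_preimage hXj
  have hdiff : X j.1 - aeval q z ∈ J.restrictScalars K ⊓ weightedHomogeneousSubmodule K w m :=
    ⟨Ideal.Quotient.eq.mp (hz_eq.symm.trans (apply_mk_eq_mk_aeval φ.toAlgHom hq_lift z)),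
      hXj.sub (hz.aeval hq_hom)⟩
  rw [SetLike.mem_coe, Pi.basisFun_apply, ← linearCoeffsOfWeight_X,
    ← add_sub_cancel (aeval q z) (X j.1), map_add]
  exact add_mem (Submodule.mem_sup_left (linearCoeffsOfWeight_aeval_mem_span
      (fun i => (hq_hom i).constantCoeff_eq_zero (hw i).ne') hz))
    (Submodule.mem_sup_right (Submodule.mem_map_of_mem hdiff))

theorem exists_lift_span_linearCoeffsOfWeight_eq_top [Finite σ] (hw : ∀ i, 0 < w i)
    (hφ : IsWeightedGraded w φ) :
    ∃ u : σ → MvPolynomial σ K, (∀ i, IsWeightedHomogeneous w (u i) (w i)) ∧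
      (∀ i, Ideal.Quotient.mk J (u i) = φ (Ideal.Quotient.mk I (X i))) ∧
      ∀ m, Submodule.span K
        (Set.range fun i : {i // w i = m} => linearCoeffsOfWeight K w m (u i)) = ⊤ := by
  classical
  cases nonempty_fintype σ
  choose q hq_hom hq_lift using fun i => hφ.exists_lift (isWeightedHomogeneous_X K w i)
  have hcorr : ∀ m, ∃ κ : {i // w i = m} → MvPolynomial σ K,
      (∀ i, κ i ∈ J.restrictScalars K ⊓ weightedHomogeneousSubmodule K w m) ∧
      Submodule.span K
        (Set.range fun i : {i // w i = m} => linearCoeffsOfWeight K w m (q i + κ i)) = ⊤ := by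
    intro m
    obtain ⟨δ, hδ, hspan⟩ := Submodule.exists_add_span_eq_top _ _
      (span_linearCoeffsOfWeight_sup_eq_top hw hφ hq_hom hq_lift m)
      (finrank_fintype_fun_eq_card K)
    choose κ hκ hκδ using fun i => Submodule.mem_map.mp (hδ i)
    refine ⟨κ, hκ, ?_⟩
    simpa [hκδ] using hspan
  choose κ hκ hκ_span using hcorr
  refine ⟨fun i => q i + κ (w i) ⟨i, rfl⟩, fun i => (hq_hom i).add (hκ _ _).2, fun i => ?_,
    fun m => ?_⟩
  · rw [map_add, Ideal.Quotient.eq_zero_iff_mem.mpr (hκ _ _).1, add_zero, hq_lift]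
  · convert hκ_span m using 4 with i
    obtain ⟨i, rfl⟩ := i
    rfl

end IsWeightedGraded

end Field

end MvPolynomial

theorem graded_iso_induced_by_graded_automorphism_general
    (n : ℕ) (w : Fin n → ℕ) (hw : ∀ i, 0 < w i)
    (f g : MvPolynomial (Fin n) ℂ)
    (φ : MilnorAlgebra g ≃ₐ[ℂ] MilnorAlgebra f)
    (hφ : ∀ e : ℕ, Submodule.map φ.toLinearMap (milnorPiece w g e) = milnorPiece w f e) :
    ∃ u : MvPolynomial (Fin n) ℂ ≃ₐ[ℂ] MvPolynomial (Fin n) ℂ,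
      (∀ (e : ℕ) (p : MvPolynomial (Fin n) ℂ),
          IsWeightedHomogeneous w p e → IsWeightedHomogeneous w (u p) e) ∧
      Ideal.map (u : MvPolynomial (Fin n) ℂ →+* MvPolynomial (Fin n) ℂ) (jacobianIdeal g) =
        jacobianIdeal f ∧
      ∀ p : MvPolynomial (Fin n) ℂ,
        φ (Ideal.Quotient.mk (jacobianIdeal g) p) = Ideal.Quotient.mk (jacobianIdeal f) (u p) := by
  obtain ⟨v, hv_hom, hv_lift, hv_span⟩ :=
    IsWeightedGraded.exists_lift_span_linearCoeffsOfWeight_eq_top (φ := φ) hw hφ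
  have hsurj := aeval_surjective_of_span_linearCoeffsOfWeight hw hv_hom hv_span
  let u := AlgEquiv.ofBijective (aeval v)
    ⟨(aeval v).toRingHom.injective_of_surjective_of_isNoetherianRing hsurj, hsurj⟩
  have hu_lift : ∀ p, φ (Ideal.Quotient.mk _ p) = Ideal.Quotient.mk _ (u p) :=
    apply_mk_eq_mk_aeval φ.toAlgHom hv_lift
  exact ⟨u, fun e p hp => hp.aeval hv_hom,
    Ideal.map_eq_of_quotient_mk_comm u.toRingEquiv φ.toRingEquiv hu_lift, hu_lift⟩

/-- If `f, g` are weighted homogeneous of degree `d` with respect to positive weights and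
`φ : M(g) ≃ M(f)` is an isomorphism of graded ℂ-algebras, then `φ` is induced by a ℂ-algebra
automorphism `u*` of `ℂ[x₁,…,xₙ]` which preserves the weighted grading and satisfies
`u*(J_g) = J_f`: that is, `φ ∘ p = q ∘ u*` for the quotient projections `p, q`. -/
theorem graded_iso_induced_by_graded_automorphism
    (n : ℕ) (w : Fin n → ℕ) (hw : ∀ i, 0 < w i) (d : ℕ)
    (f g : MvPolynomial (Fin n) ℂ)
    (hf : IsWeightedHomogeneous w f d) (hg : IsWeightedHomogeneous w g d)
    (φ : MilnorAlgebra g ≃ₐ[ℂ] MilnorAlgebra f)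
    (hφ : ∀ e : ℕ, Submodule.map φ.toLinearMap (milnorPiece w g e) = milnorPiece w f e) :
    ∃ u : MvPolynomial (Fin n) ℂ ≃ₐ[ℂ] MvPolynomial (Fin n) ℂ,
      (∀ (e : ℕ) (p : MvPolynomial (Fin n) ℂ),
          IsWeightedHomogeneous w p e → IsWeightedHomogeneous w (u p) e) ∧
      Ideal.map (u : MvPolynomial (Fin n) ℂ →+* MvPolynomial (Fin n) ℂ) (jacobianIdeal g) =
        jacobianIdeal f ∧
      ∀ p : MvPolynomial (Fin n) ℂ,
        φ (Ideal.Quotient.mk (jacobianIdeal g) p) = Ideal.Quotient.mk (jacobianIdeal f) (u p) :=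
  graded_iso_induced_by_graded_automorphism_general n w hw f g φ hφ
end

section
/- Let h : (ℂ^n, 0) → (ℂ, 0) be a holomorphic germ with h ∉ J_h, where J_h ⊆ O_n is its Jacobian ideal. For t ∈ ℂ define the germ f_t(x, y, z) = h(x) + (1 + z + t)·h(y) on (ℂ^{2n+1}, 0). Then the germ h(y) does NOT belong to the ideal (f_t) + m_{2n+1}·J_{h(x)} + m_{2n+1}·J_{h(y)} + m_{2n+1}·(h(y)) in O_{2n+1}, where m_{2n+1} is the maximal ideal of O_{2n+1}. -/
/-!
Restricting the relation to `z = 0` and to the slices `{x = y}` and `{x = 0}` of `ℂⁿ × ℂⁿ`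
expresses `h · (1 - a (2 + t) - e)` and `h · (1 - a (1 + t) - e)` as combinations of the
partial derivatives of `h`; on the slice `{x = 0}` this uses that `h` and all its partials
vanish at `0`, the latter because `h ∉ J_h`. Since `e (0) = 0`, the two multipliers cannot both
vanish at `0`, and dividing by one that does not puts `h` into `J_h`.
-/

open scoped Topology
open Filter

noncomputable def partialDeriv {n : ℕ} (i : Fin n) (h : (Fin n → ℂ) → ℂ) :
    (Fin n → ℂ) → ℂ :=
  fun x => fderiv ℂ h x (Pi.single i 1)

def MemJacobianIdeal {n : ℕ} (h : (Fin n → ℂ) → ℂ) : Prop :=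
  ∃ a : Fin n → ((Fin n → ℂ) → ℂ), (∀ i, AnalyticAt ℂ (a i) 0) ∧
    ∀ᶠ x in 𝓝 (0 : Fin n → ℂ), h x = ∑ i, a i x * partialDeriv i h x

lemma AnalyticAt.partialDeriv {n : ℕ} {h : (Fin n → ℂ) → ℂ} {x : Fin n → ℂ}
    (hh : AnalyticAt ℂ h x) (i : Fin n) : AnalyticAt ℂ (partialDeriv i h) x := by
  exact ((ContinuousLinearMap.apply ℂ ℂ (Pi.single i (1 : ℂ))).analyticAt _).comp hh.fderiv

lemma memJacobianIdeal_of_mul_eq_sum {n : ℕ} {h G : (Fin n → ℂ) → ℂ}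
    {d : Fin n → (Fin n → ℂ) → ℂ} (hG : AnalyticAt ℂ G 0) (hG0 : G 0 ≠ 0)
    (hd : ∀ i, AnalyticAt ℂ (d i) 0)
    (heq : ∀ᶠ y in 𝓝 (0 : Fin n → ℂ), h y * G y = ∑ i, d i y * partialDeriv i h y) :
    MemJacobianIdeal h := by
  refine ⟨fun i y => d i y / G y, fun i => (hd i).div hG hG0, ?_⟩
  filter_upwards [heq, hG.continuousAt.eventually_ne hG0] with y hy hGy
  simp only [div_mul_eq_mul_div, ← Finset.sum_div, ← hy, mul_div_cancel_right₀ _ hGy]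

lemma memJacobianIdeal_of_partialDeriv_ne_zero {n : ℕ} {h : (Fin n → ℂ) → ℂ}
    (hh : AnalyticAt ℂ h 0) {i : Fin n} (hi : partialDeriv i h 0 ≠ 0) :
    MemJacobianIdeal h :=
  memJacobianIdeal_of_mul_eq_sum (hh.partialDeriv i) hi
    (d := fun j y => if j = i then h y else 0)
    (fun j => by split_ifs <;> [exact hh; exact analyticAt_const])
    (Eventually.of_forall fun y => by simp [ite_mul])

section Restriction

variable {n : ℕ} {h : (Fin n → ℂ) → ℂ} {t : ℂ} {a e : (Fin n → ℂ) × (Fin n → ℂ) × ℂ → ℂ}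
  {b c : Fin n → (Fin n → ℂ) × (Fin n → ℂ) × ℂ → ℂ}

lemma memJacobianIdeal_of_diagonal (ha : AnalyticAt ℂ a 0) (hb : ∀ i, AnalyticAt ℂ (b i) 0)
    (hc : ∀ j, AnalyticAt ℂ (c j) 0) (he : AnalyticAt ℂ e 0)
    (heq : ∀ᶠ p : (Fin n → ℂ) × (Fin n → ℂ) × ℂ in 𝓝 0,
      h p.2.1 = a p * (h p.1 + (1 + p.2.2 + t) * h p.2.1) + (∑ i, b i p * partialDeriv i h p.1) +
        (∑ j, c j p * partialDeriv j h p.2.1) + e p * h p.2.1)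
    (hdiag : 1 - a 0 * (2 + t) - e 0 ≠ 0) :
    MemJacobianIdeal h := by
  have hφ : AnalyticAt ℂ (fun y : Fin n → ℂ => (y, y, (0 : ℂ))) 0 :=
    analyticAt_id.prod (analyticAt_id.prod analyticAt_const)
  refine memJacobianIdeal_of_mul_eq_sum (G := fun y => 1 - a (y, y, 0) * (2 + t) - e (y, y, 0))
    (d := fun i y => b i (y, y, 0) + c i (y, y, 0))
    ((analyticAt_const.sub ((ha.comp_of_eq hφ rfl).mul analyticAt_const)).sub (he.comp_of_eq hφ rfl)) hdiag
    (fun i => ((hb i).comp_of_eq hφ rfl).add ((hc i).comp_of_eq hφ rfl)) ?_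
  filter_upwards [hφ.continuousAt.tendsto.eventually heq] with y hy
  simp only [add_mul, Finset.sum_add_distrib]
  linear_combination hy

lemma memJacobianIdeal_of_slice (ha : AnalyticAt ℂ a 0) (hc : ∀ j, AnalyticAt ℂ (c j) 0)
    (he : AnalyticAt ℂ e 0)
    (heq : ∀ᶠ p : (Fin n → ℂ) × (Fin n → ℂ) × ℂ in 𝓝 0,
      h p.2.1 = a p * (h p.1 + (1 + p.2.2 + t) * h p.2.1) + (∑ i, b i p * partialDeriv i h p.1) +
        (∑ j, c j p * partialDeriv j h p.2.1) + e p * h p.2.1)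
    (h0 : h 0 = 0) (hdh : ∀ i, partialDeriv i h 0 = 0) (hslice : 1 - a 0 * (1 + t) - e 0 ≠ 0) :
    MemJacobianIdeal h := by
  have hφ : AnalyticAt ℂ (fun y : Fin n → ℂ => ((0 : Fin n → ℂ), y, (0 : ℂ))) 0 :=
    analyticAt_const.prod (analyticAt_id.prod analyticAt_const)
  refine memJacobianIdeal_of_mul_eq_sum (G := fun y => 1 - a (0, y, 0) * (1 + t) - e (0, y, 0))
    (d := fun j y => c j (0, y, 0))
    ((analyticAt_const.sub ((ha.comp_of_eq hφ rfl).mul analyticAt_const)).sub (he.comp_of_eq hφ rfl)) hslice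
    (fun j => (hc j).comp_of_eq hφ rfl) ?_
  filter_upwards [hφ.continuousAt.tendsto.eventually heq] with y hy
  simp only [h0, hdh, mul_zero, Finset.sum_const_zero] at hy
  linear_combination hy

end Restriction

/-- **(Gaffney–Hauser example.)** Let `h : (ℂⁿ, 0) → (ℂ, 0)` be a holomorphic germ with
`h ∉ J_h` (i.e. `h` is not a germ-combination of its partial derivatives near `0`).  For
`t ∈ ℂ` let `f_t(x, y, z) = h(x) + (1 + z + t)·h(y)` on `(ℂⁿ × ℂⁿ × ℂ, 0)`.  Then the germ
`h(y)` does not belong to the ideal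
`(f_t) + m_{2n+1}·J_{h(x)} + m_{2n+1}·J_{h(y)} + m_{2n+1}·(h(y))` of `O_{2n+1}`. -/
theorem gaffney_hauser_not_mem
    (n : ℕ) (h : (Fin n → ℂ) → ℂ) (hh : AnalyticAt ℂ h 0) (h0 : h 0 = 0)
    (hnotJ : ¬ ∃ a : Fin n → ((Fin n → ℂ) → ℂ),
      (∀ i, AnalyticAt ℂ (a i) 0) ∧
      (∀ᶠ x in 𝓝 (0 : Fin n → ℂ), h x = ∑ i, a i x * partialDeriv i h x))
    (t : ℂ) :
    ¬ ∃ (a : ((Fin n → ℂ) × (Fin n → ℂ) × ℂ) → ℂ)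
        (b c : Fin n → ((Fin n → ℂ) × (Fin n → ℂ) × ℂ) → ℂ)
        (e : ((Fin n → ℂ) × (Fin n → ℂ) × ℂ) → ℂ),
      AnalyticAt ℂ a 0 ∧
      (∀ i, AnalyticAt ℂ (b i) 0 ∧ b i 0 = 0) ∧
      (∀ j, AnalyticAt ℂ (c j) 0 ∧ c j 0 = 0) ∧
      AnalyticAt ℂ e 0 ∧ e 0 = 0 ∧
      (∀ᶠ p : (Fin n → ℂ) × (Fin n → ℂ) × ℂ in 𝓝 0,
        h p.2.1 =
          a p * (h p.1 + (1 + p.2.2 + t) * h p.2.1) +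
          (∑ i, b i p * partialDeriv i h p.1) +
          (∑ j, c j p * partialDeriv j h p.2.1) +
          e p * h p.2.1) := by
  rintro ⟨a, b, c, e, ha, hb, hc, he, he0, heq⟩
  have hdh : ∀ i, partialDeriv i h 0 = 0 := fun i =>
    by_contra fun hi => hnotJ (memJacobianIdeal_of_partialDeriv_ne_zero hh hi)
  by_cases hdiag : 1 - a 0 * (2 + t) - e 0 = 0
  · have hslice : 1 - a 0 * (1 + t) - e 0 ≠ 0 := fun hslice =>
      one_ne_zero (by linear_combination (2 + t) * hslice - (1 + t) * hdiag + he0 : (1 : ℂ) = 0)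
    exact hnotJ (memJacobianIdeal_of_slice ha (fun j => (hc j).1) he heq h0 hdh hslice)
  · exact hnotJ (memJacobianIdeal_of_diagonal ha (fun i => (hb i).1) (fun j => (hc j).1) he heq
      hdiag)
end
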